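/- With the same setup (F obtained from F̃ by right composition with a 2×2 matrix T, i.e. F^i_{mnp} = Σ F̃^i_{m̃ñp̃} T^m̃_m T^ñ_n T^p̃_p), one has G_{2222}(F) = det(T) · ω̃[6](T¹₂, T²₂), where ω̃[6](z³,z⁴) = G̃_{1111}(z³)⁴ + 2G̃_{1112}(z³)³z⁴ + (3G̃_{1212} + G̃_{1122})(z³)²(z⁴)² + 2G̃_{1222} z³(z⁴)³ + G̃_{2222}(z⁴)⁴. -/
import Mathlib


/-- A cubic coefficient array on ℝ²: one upper index, three lower indices in {1,2}. -/
abbrev CubicTensor := Fin 2 → Fin 2 → Fin 2 → Fin 2 → ℝ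

/-- Symmetry in the three lower indices. -/
def SymLower (F : CubicTensor) : Prop :=
  ∀ i m n p, F i m n p = F i n m p ∧ F i m n p = F i m p n

def G1111 (F : CubicTensor) : ℝ := F 0 0 0 0 * F 1 0 0 1 - F 0 0 0 1 * F 1 0 0 0
def G1112 (F : CubicTensor) : ℝ := F 0 0 0 0 * F 1 0 1 1 - F 0 0 1 1 * F 1 0 0 0
def G1122 (F : CubicTensor) : ℝ := F 0 0 0 0 * F 1 1 1 1 - F 0 1 1 1 * F 1 0 0 0
def G1212 (F : CubicTensor) : ℝ := F 0 0 0 1 * F 1 0 1 1 - F 0 0 1 1 * F 1 0 0 1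
def G1222 (F : CubicTensor) : ℝ := F 0 0 0 1 * F 1 1 1 1 - F 0 1 1 1 * F 1 0 0 1
def G2222 (F : CubicTensor) : ℝ := F 0 0 1 1 * F 1 1 1 1 - F 0 1 1 1 * F 1 0 1 1
/-- The binary quartic form ω[1] associated with F. -/
def omega1 (F : CubicTensor) (u v : ℝ) : ℝ :=
  G1111 F * u^4 + 2 * G1112 F * u^3 * v + (3 * G1212 F + G1122 F) * u^2 * v^2
    + 2 * G1222 F * u * v^3 + G2222 F * v^4

theorem right_composition_G2222 (F Ft : CubicTensor) (T : Matrix (Fin 2) (Fin 2) ℝ)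
    (hFt : SymLower Ft) (hT : IsUnit T.det)
    (hrel : ∀ i m n p, F i m n p =
      ∑ mt : Fin 2, ∑ nt : Fin 2, ∑ pt : Fin 2,
        Ft i mt nt pt * T mt m * T nt n * T pt p) :
    G2222 F = T.det * omega1 Ft (T 0 1) (T 1 1) := by
  have h010 : ∀ i, Ft i 0 1 0 = Ft i 0 0 1 := fun i => by
    rw [(hFt i 0 0 1).2]
  have h100 : ∀ i, Ft i 1 0 0 = Ft i 0 0 1 := fun i => by
    rw [(hFt i 1 0 0).1, (hFt i 0 1 0).2]
  have h101 : ∀ i, Ft i 1 0 1 = Ft i 0 1 1 := fun i => by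
    rw [(hFt i 1 0 1).1]
  have h110 : ∀ i, Ft i 1 1 0 = Ft i 0 1 1 := fun i => by
    rw [(hFt i 1 1 0).2, h101]
  simp only [G2222, omega1, G1111, G1112, G1122, G1212, G1222,
    hrel, Fin.sum_univ_two, Matrix.det_fin_two, h010, h100, h101, h110]
  ring
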